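/- Let l be an odd prime power with l^2 ≡ 1 (mod 4), and let C_1, C_2, C_3, C_4 be Hermitian LCD codes over F_{l^2} with parameters [n, k_i, d_i] for i = 1,2,3,4. Let A be the 4×4 matrix over F_{l^2} with rows (1,1,1,1), (1,1,−1,−1), (1,−1,1,−1), (1,−1,−1,1). Then the matrix-product code [C_1,C_2,C_3,C_4]A is a Hermitian LCD code over F_{l^2} with parameters [4n, k_1+k_2+k_3+k_4, ≥ min{4d_1, 2d_2, 2d_3, d_4}]. -/

import Mathlib

open Polynomial Matrix Finset

variable {F : Type*} [Field F]

/-- The minimum (Hamming) distance of a linear code `C ⊆ F^ι`: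
the least Hamming weight of a nonzero codeword. -/
noncomputable def minDist {ι : Type*} [Fintype ι] [DecidableEq F]
    (C : Submodule F (ι → F)) : ℕ :=
  sInf {d | ∃ x ∈ C, x ≠ 0 ∧ hammingNorm x = d}

/-- The Euclidean dual of a linear code. -/
def dualCode {ι : Type*} [Fintype ι] (C : Submodule F (ι → F)) :
    Submodule F (ι → F) where
  carrier := {a | ∀ b ∈ C, ∑ i, a i * b i = 0}
  add_mem' := by
    intro a b ha hb c hc
    simp only [Pi.add_apply, add_mul, Finset.sum_add_distrib,
      ha c hc, hb c hc, add_zero]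
  zero_mem' := by
    intro b hb
    simp
  smul_mem' := by
    intro r a ha b hb
    simp only [Pi.smul_apply, smul_eq_mul, mul_assoc, ← Finset.mul_sum,
      ha b hb, mul_zero]

/-- `C` is a linear complementary dual (LCD) code. -/
def IsLCD {ι : Type*} [Fintype ι] (C : Submodule F (ι → F)) : Prop :=
  C ⊓ dualCode C = ⊥

/-- The Hermitian dual (with respect to `⟨a,b⟩ = ∑ i, a i * (b i)^l`) of a linear code. -/
def hermitianDual (l : ℕ) {ι : Type*} [Fintype ι] (C : Submodule F (ι → F)) :
    Submodule F (ι → F) where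
  carrier := {a | ∀ b ∈ C, ∑ i, a i * (b i) ^ l = 0}
  add_mem' := by
    intro a b ha hb c hc
    simp only [Pi.add_apply, add_mul, Finset.sum_add_distrib,
      ha c hc, hb c hc, add_zero]
  zero_mem' := by
    intro b hb
    simp
  smul_mem' := by
    intro r a ha b hb
    simp only [Pi.smul_apply, smul_eq_mul, mul_assoc, ← Finset.mul_sum,
      ha b hb, mul_zero]

/-- `C` is a Hermitian linear complementary dual code. -/
def IsHermitianLCD (l : ℕ) {ι : Type*} [Fintype ι] (C : Submodule F (ι → F)) : Prop :=
  C ⊓ hermitianDual l C = ⊥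

/-- The matrix-product code `[C_1, …, C_s]·A`: all concatenated vectors
`(∑ i a_{i1} c_i, …, ∑ i a_{im} c_i)` with `c_i ∈ C_i`; coordinates are indexed by
`Fin m × Fin n` (block `j`, position `t` within block). -/
def matrixProductCode {s m n : ℕ} (A : Matrix (Fin s) (Fin m) F)
    (C : Fin s → Submodule F (Fin n → F)) :
    Submodule F (Fin m × Fin n → F) where
  carrier := {x | ∃ c : Fin s → (Fin n → F), (∀ i, c i ∈ C i) ∧
    x = fun p => ∑ i, A i p.1 * c i p.2}
  add_mem' := by
    rintro x y ⟨c, hc, rfl⟩ ⟨d, hd, rfl⟩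
    refine ⟨fun i => c i + d i, fun i => (C i).add_mem (hc i) (hd i), ?_⟩
    funext p
    simp [mul_add, Finset.sum_add_distrib]
  zero_mem' := ⟨0, fun i => (C i).zero_mem, by funext p; simp⟩
  smul_mem' := by
    rintro r x ⟨c, hc, rfl⟩
    refine ⟨fun i => r • c i, fun i => (C i).smul_mem r (hc i), ?_⟩
    funext p
    simp [Finset.mul_sum, mul_left_comm]

/-- A matrix is non-singular by columns (NSC) if, for every `t ≤ s` and every strictly
increasing choice of `t` columns, the `t × t` submatrix formed from the first `t` rows
and those columns is non-singular. -/
def NSC {s m : ℕ} (A : Matrix (Fin s) (Fin m) F) : Prop :=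
  ∀ (t : ℕ) (ht : t ≤ s) (j : Fin t → Fin m), StrictMono j →
    (Matrix.of fun a b : Fin t => A (Fin.castLE ht a) (j b)).det ≠ 0

/-- The cyclic code of length `n` with generator polynomial `g` (a divisor of `Xⁿ - 1`),
viewed in `F^n` via the coefficient identification: a word `c` lies in the code iff the
associated polynomial `∑ cᵢ Xⁱ` (of degree `< n`) is a multiple of `g`. -/
def cyclicCode (n : ℕ) (g : F[X]) : Submodule F (Fin n → F) where
  carrier := {c | g ∣ ∑ i : Fin n, Polynomial.C (c i) * Polynomial.X ^ (i : ℕ)}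
  add_mem' := by
    intro a b ha hb
    have h : (∑ i : Fin n, Polynomial.C ((a + b) i) * Polynomial.X ^ (i : ℕ))
        = (∑ i : Fin n, Polynomial.C (a i) * Polynomial.X ^ (i : ℕ))
          + (∑ i : Fin n, Polynomial.C (b i) * Polynomial.X ^ (i : ℕ)) := by
      simp [add_mul, Finset.sum_add_distrib]
    simp only [Set.mem_setOf_eq] at ha hb ⊢
    rw [h]
    exact dvd_add ha hb
  zero_mem' := by simp
  smul_mem' := by
    intro r a ha
    have h : (∑ i : Fin n, Polynomial.C ((r • a) i) * Polynomial.X ^ (i : ℕ))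
        = Polynomial.C r * ∑ i : Fin n, Polynomial.C (a i) * Polynomial.X ^ (i : ℕ) := by
      simp [Finset.mul_sum, mul_assoc]
    simp only [Set.mem_setOf_eq] at ha ⊢
    rw [h]
    exact ha.mul_left _

/-- The conjugate-reciprocal polynomial
`f^⊥(x) = a₀^{-l} (a_k^l + a_{k-1}^l x + ⋯ + a₀^l x^k)` of `f = a₀ + a₁ x + ⋯ + a_k x^k`. -/
noncomputable def conjReciprocal (l : ℕ) (f : F[X]) : F[X] :=
  Polynomial.C ((f.coeff 0 ^ l)⁻¹) *
    ∑ i ∈ Finset.range (f.natDegree + 1),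
      Polynomial.C (f.coeff (f.natDegree - i) ^ l) * Polynomial.X ^ i

/-!
The matrix `A` has entries `±1`, which `x ↦ x ^ l` fixes since `l` is odd, and `A Aᵀ = 4 I` with
`4 ≠ 0` because `F` has odd order. Pairing a codeword `[c₁, …, c₄] A` with the test word
`[0, …, y, …, 0] A`, `y ∈ Cᵢ` in slot `i`, therefore gives `4 ⟨cᵢ, y⟩_h`; so a product codeword in
its own Hermitian dual has every `cᵢ ∈ Cᵢ ∩ Cᵢ^⊥h = 0`. Invertibility of `A` makes
`(cᵢ) ↦ [c₁, …, c₄] A` injective, which gives the dimension. For the distance, let `r` be the last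
index with `c_r ≠ 0`: at each position `t` of the support of `c_r` the column `(cᵢ t)ᵢ A` is a
combination of the first `r + 1` rows of `A` with nonzero last coefficient, hence has weight at least
`4, 2, 2, 1` for `r = 0, 1, 2, 3`; summing over the positions bounds the weight by that number times
`d_r`.
-/

lemma two_ne_zero_of_odd_card [Fintype F] (hF : Odd (Fintype.card F)) : (2 : F) ≠ 0 :=
  Ring.two_ne_zero fun h => by
    simpa [Nat.odd_iff.mp hF] using FiniteField.even_card_iff_char_two.mp h

section HammingWeight

variable [DecidableEq F]

lemma hammingNorm_eq_sum_hammingNorm_fiber {ι κ : Type*} [Fintype ι] [Fintype κ]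
    (x : ι × κ → F) : hammingNorm x = ∑ t, hammingNorm fun j => x (j, t) := by
  simp only [hammingNorm, Finset.card_filter]
  exact Fintype.sum_prod_type_right _

lemma minDist_le_hammingNorm {ι : Type*} [Fintype ι] {C : Submodule F (ι → F)} {x : ι → F}
    (hx : x ∈ C) (hx0 : x ≠ 0) : minDist C ≤ hammingNorm x :=
  Nat.sInf_le ⟨x, hx, hx0, rfl⟩

lemma le_minDist {ι : Type*} [Fintype ι] {C : Submodule F (ι → F)} (hC : C ≠ ⊥) {b : ℕ}
    (h : ∀ x ∈ C, x ≠ 0 → b ≤ hammingNorm x) : b ≤ minDist C := by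
  obtain ⟨x, hx, hx0⟩ := (Submodule.ne_bot_iff C).mp hC
  exact le_csInf ⟨_, x, hx, hx0, rfl⟩ fun _ ⟨y, hy, hy0, hyd⟩ => hyd ▸ h y hy hy0

end HammingWeight

section MatrixProductCode

variable {s m n : ℕ} (A : Matrix (Fin s) (Fin m) F) (C : Fin s → Submodule F (Fin n → F))

def matrixProductMap : (Π i, C i) →ₗ[F] (Fin m × Fin n → F) where
  toFun c p := ∑ i, A i p.1 * (c i : Fin n → F) p.2
  map_add' a b := by
    funext p
    simp [mul_add, Finset.sum_add_distrib]
  map_smul' r a := by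
    funext p
    simp [Finset.mul_sum, mul_left_comm]

lemma range_matrixProductMap :
    LinearMap.range (matrixProductMap A C) = matrixProductCode A C := by
  ext x
  constructor
  · rintro ⟨c, rfl⟩
    exact ⟨fun i => c i, fun i => (c i).2, rfl⟩
  · rintro ⟨c, hc, rfl⟩
    exact ⟨fun i => ⟨c i, hc i⟩, rfl⟩

lemma matrixProduct_fiber_eq_vecMul (c : Fin s → Fin n → F) (t : Fin n) :
    (fun j => ∑ i, A i j * c i t) = (fun i => c i t) ᵥ* A := by
  funext j
  simp only [vecMul, dotProduct, mul_comm]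

variable {A C}

lemma matrixProductMap_injective (hA : Function.Injective A.vecMul) :
    Function.Injective (matrixProductMap A C) := by
  rw [injective_iff_map_eq_zero]
  intro c hc
  have hfiber (t : Fin n) : (fun i => (c i : Fin n → F) t) = 0 := by
    apply hA
    change _ ᵥ* A = 0 ᵥ* A
    rw [← matrixProduct_fiber_eq_vecMul, zero_vecMul]
    funext j
    exact congrFun hc (j, t)
  funext i
  exact Subtype.ext (funext fun t => congrFun (hfiber t) i)

lemma finrank_matrixProductCode (hA : Function.Injective A.vecMul) :
    Module.finrank F (matrixProductCode A C) = ∑ i, Module.finrank F (C i) := by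
  rw [← range_matrixProductMap, LinearMap.finrank_range_of_inj (matrixProductMap_injective hA),
    Module.finrank_pi_fintype]

lemma matrixProductCode_ne_bot (hA : Function.Injective A.vecMul) {i : Fin s} (hi : C i ≠ ⊥) :
    matrixProductCode A C ≠ ⊥ := by
  rw [ne_eq, ← Submodule.finrank_eq_zero, finrank_matrixProductCode hA]
  exact fun h => hi (Submodule.finrank_eq_zero.mp (Finset.sum_eq_zero_iff.mp h i (mem_univ i)))

lemma exists_mul_hammingNorm_le [DecidableEq F] {δ : Fin s → ℕ}
    (hA : ∀ r (v : Fin s → F), v r ≠ 0 → (∀ i, r < i → v i = 0) → δ r ≤ hammingNorm (v ᵥ* A))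
    {c : Fin s → Fin n → F} (hc : c ≠ 0) :
    ∃ r, c r ≠ 0 ∧
      δ r * hammingNorm (c r) ≤ hammingNorm fun p : Fin m × Fin n => ∑ i, A i p.1 * c i p.2 := by
  obtain ⟨i₀, hi₀⟩ := Function.ne_iff.mp hc
  obtain ⟨r, hrmem, hlast⟩ := (univ.filter fun i => c i ≠ 0).exists_max_image id
    ⟨i₀, mem_filter.mpr ⟨mem_univ _, hi₀⟩⟩
  have hr : c r ≠ 0 := (mem_filter.mp hrmem).2
  have hvanish (i : Fin s) (hi : r < i) : c i = 0 := by
    by_contra h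
    exact not_le.mpr hi (hlast i (mem_filter.mpr ⟨mem_univ _, h⟩))
  refine ⟨r, hr, ?_⟩
  calc δ r * hammingNorm (c r)
      = ∑ t ∈ univ.filter fun t => c r t ≠ 0, δ r := by
        rw [sum_const, smul_eq_mul, mul_comm, hammingNorm]
    _ ≤ ∑ t ∈ univ.filter fun t => c r t ≠ 0, hammingNorm ((fun i => c i t) ᵥ* A) :=
        sum_le_sum fun t ht =>
          hA r _ (mem_filter.mp ht).2 fun i hi => congrFun (hvanish i hi) t
    _ ≤ ∑ t, hammingNorm ((fun i => c i t) ᵥ* A) :=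
        sum_le_sum_of_subset (filter_subset _ _)
    _ = _ := by
        simp only [hammingNorm_eq_sum_hammingNorm_fiber, matrixProduct_fiber_eq_vecMul]

lemma le_minDist_matrixProductCode [DecidableEq F] {δ : Fin s → ℕ}
    (hA : ∀ r (v : Fin s → F), v r ≠ 0 → (∀ i, r < i → v i = 0) → δ r ≤ hammingNorm (v ᵥ* A))
    (hne : matrixProductCode A C ≠ ⊥) {b : ℕ} (hb : ∀ r, b ≤ δ r * minDist (C r)) :
    b ≤ minDist (matrixProductCode A C) := by
  refine le_minDist hne ?_
  rintro _ ⟨c, hc, rfl⟩ hx0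
  have hc0 : c ≠ 0 := by
    rintro rfl
    exact hx0 (funext fun p => by simp)
  obtain ⟨r, hr, hle⟩ := exists_mul_hammingNorm_le hA hc0
  calc b ≤ δ r * minDist (C r) := hb r
    _ ≤ δ r * hammingNorm (c r) := Nat.mul_le_mul_left _ (minDist_le_hammingNorm (hc r) hr)
    _ ≤ _ := hle

lemma hermitian_pairing_matrixProduct_single (l : ℕ) (c : Fin s → Fin n → F) (i : Fin s)
    (y : Fin n → F) :
    ∑ p : Fin m × Fin n, (∑ k, A k p.1 * c k p.2) *
        (∑ k, A k p.1 * (Pi.single i y : Fin s → Fin n → F) k p.2) ^ l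
      = ∑ k, (A * (A.map (· ^ l))ᵀ) k i * ∑ t, c k t * y t ^ l := by
  have hsingle (j : Fin m) (t : Fin n) :
      ∑ k, A k j * (Pi.single i y : Fin s → Fin n → F) k t = A i j * y t := by
    rw [sum_eq_single i (fun k _ hk => by simp [hk]) (by simp)]
    simp
  simp only [hsingle, mul_pow, Fintype.sum_prod_type, mul_apply, transpose_apply, map_apply,
    sum_mul, mul_sum]
  rw [sum_comm]
  simp_rw [sum_comm (γ := Fin m)]
  rw [sum_comm]
  exact sum_congr rfl fun _ _ => sum_congr rfl fun _ _ => sum_congr rfl fun _ _ => by ring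

lemma isHermitianLCD_matrixProductCode {l : ℕ} {w : Fin s → F} (hw : ∀ i, w i ≠ 0)
    (hA : A * (A.map (· ^ l))ᵀ = diagonal w) (hC : ∀ i, IsHermitianLCD l (C i)) :
    IsHermitianLCD l (matrixProductCode A C) := by
  rw [IsHermitianLCD, eq_bot_iff]
  rintro _ ⟨⟨c, hc, rfl⟩, hdual⟩
  suffices hzero : ∀ i, c i = 0 by
    rw [Submodule.mem_bot]
    funext p
    simp [hzero]
  intro i
  have hmem : c i ∈ C i ⊓ hermitianDual l (C i) := by
    refine ⟨hc i, fun y hy => ?_⟩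
    have hsingle (k : Fin s) : (Pi.single i y : Fin s → Fin n → F) k ∈ C k := by
      rcases eq_or_ne k i with rfl | hk
      · simpa using hy
      · simp [hk, zero_mem]
    have := hdual _ ⟨Pi.single i y, hsingle, rfl⟩
    rw [hermitian_pairing_matrixProduct_single, hA] at this
    simpa [diagonal_apply, hw i] using this
  rwa [hC i, Submodule.mem_bot] at hmem

end MatrixProductCode

abbrev hadamard4 : Matrix (Fin 4) (Fin 4) F :=
  !![1, 1, 1, 1; 1, 1, -1, -1; 1, -1, 1, -1; 1, -1, -1, 1]

lemma hadamard4_map_pow {l : ℕ} (hl : Odd l) :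
    (hadamard4 : Matrix (Fin 4) (Fin 4) F).map (· ^ l) = hadamard4 := by
  ext i j
  fin_cases i <;> fin_cases j <;> simp [hadamard4, hl.neg_one_pow]

lemma hadamard4_mul_transpose :
    hadamard4 * hadamard4ᵀ = (diagonal fun _ => 4 : Matrix (Fin 4) (Fin 4) F) := by
  ext i j
  fin_cases i <;> fin_cases j <;> simp [hadamard4, mul_apply, Fin.sum_univ_four] <;> norm_num

lemma isUnit_hadamard4 (h4 : (4 : F) ≠ 0) : IsUnit (hadamard4 : Matrix (Fin 4) (Fin 4) F) := by
  refine (isUnit_iff_isUnit_det _).mpr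
    (isUnit_det_of_right_inverse (B := (4 : F)⁻¹ • hadamard4ᵀ) ?_)
  rw [mul_smul_comm, hadamard4_mul_transpose]
  ext i j
  simp [one_apply, diagonal_apply, h4]

lemma vecMul_hadamard4 (a b c d : F) :
    ![a, b, c, d] ᵥ* hadamard4 = ![a + b + c + d, a + b - c - d, a - b + c - d, a - b - c + d] := by
  ext j
  fin_cases j <;> simp [vecMul, dotProduct, hadamard4, Fin.sum_univ_four] <;> ring

lemma hammingNorm_vecMul_hadamard4 [DecidableEq F] (h4 : (4 : F) ≠ 0) (r : Fin 4) (v : Fin 4 → F)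
    (hr : v r ≠ 0) (hlast : ∀ i, r < i → v i = 0) :
    ![4, 2, 2, 1] r ≤ hammingNorm (v ᵥ* hadamard4) := by
  have h2 : (2 : F) ≠ 0 := fun h => h4 (by linear_combination 2 * h)
  obtain ⟨a, b, c, d, rfl⟩ : ∃ a b c d, v = ![a, b, c, d] :=
    ⟨v 0, v 1, v 2, v 3, by ext i; fin_cases i <;> rfl⟩
  simp only [vecMul_hadamard4, hammingNorm, card_filter, Fin.sum_univ_four]
  fin_cases r <;> simp at hr
  · obtain ⟨rfl, rfl, rfl⟩ : b = 0 ∧ c = 0 ∧ d = 0 :=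
      ⟨hlast 1 (by decide), hlast 2 (by decide), hlast 3 (by decide)⟩
    simp_all
  · obtain ⟨rfl, rfl⟩ : c = 0 ∧ d = 0 := ⟨hlast 2 (by decide), hlast 3 (by decide)⟩
    have hb : a + b ≠ 0 ∨ a - b ≠ 0 := by
      by_contra! h
      exact mul_ne_zero h2 hr (by linear_combination h.1 - h.2)
    clear hlast
    split_ifs <;> simp_all
  · obtain rfl : d = 0 := hlast 3 (by decide)
    have h01 : a + b + c ≠ 0 ∨ a + b - c ≠ 0 := by
      by_contra! h
      exact mul_ne_zero h2 hr (by linear_combination h.1 - h.2)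
    have h23 : a - b + c ≠ 0 ∨ a - b - c ≠ 0 := by
      by_contra! h
      exact mul_ne_zero h2 hr (by linear_combination h.1 - h.2)
    clear hlast
    split_ifs <;> simp_all
  · have hd : a + b + c + d ≠ 0 ∨ a + b - c - d ≠ 0 ∨ a - b + c - d ≠ 0 ∨ a - b - c + d ≠ 0 := by
      by_contra! h
      exact mul_ne_zero h4 hr (by linear_combination h.1 - h.2.1 - h.2.2.1 + h.2.2.2)
    clear hlast
    split_ifs <;> simp_all

theorem stmt17_general {F : Type*} [Field F] [Fintype F] [DecidableEq F]
    {l : ℕ} (hodd : Odd l)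
    (hcard : Fintype.card F = l ^ 2)
    {n : ℕ} (C : Fin 4 → Submodule F (Fin n → F)) (k d : Fin 4 → ℕ)
    (hLCD : ∀ i, IsHermitianLCD l (C i))
    (hk : ∀ i, Module.finrank F (C i) = k i)
    (hC : ∀ i, C i ≠ ⊥)
    (hd : ∀ i, minDist (C i) = d i) :
    IsHermitianLCD l
      (matrixProductCode (!![1,1,1,1; 1,1,-1,-1; 1,-1,1,-1; 1,-1,-1,1] :
        Matrix (Fin 4) (Fin 4) F) C) ∧
    Module.finrank F
      (matrixProductCode (!![1,1,1,1; 1,1,-1,-1; 1,-1,1,-1; 1,-1,-1,1] :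
        Matrix (Fin 4) (Fin 4) F) C) = k 0 + k 1 + k 2 + k 3 ∧
    min (4 * d 0) (min (2 * d 1) (min (2 * d 2) (d 3)))
      ≤ minDist
        (matrixProductCode (!![1,1,1,1; 1,1,-1,-1; 1,-1,1,-1; 1,-1,-1,1] :
          Matrix (Fin 4) (Fin 4) F) C) := by
  have h2 : (2 : F) ≠ 0 := two_ne_zero_of_odd_card (hcard ▸ hodd.pow)
  have h4 : (4 : F) ≠ 0 := by
    rw [show (4 : F) = 2 * 2 by norm_num]
    exact mul_ne_zero h2 h2
  have hinj : Function.Injective (hadamard4 : Matrix (Fin 4) (Fin 4) F).vecMul :=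
    vecMul_injective_of_isUnit (isUnit_hadamard4 h4)
  refine ⟨isHermitianLCD_matrixProductCode (w := fun _ => 4) (fun _ => h4)
      (by rw [hadamard4_map_pow hodd, hadamard4_mul_transpose]) hLCD, ?_, ?_⟩
  · rw [finrank_matrixProductCode hinj, Fin.sum_univ_four, hk, hk, hk, hk]
  · refine le_minDist_matrixProductCode (hammingNorm_vecMul_hadamard4 h4)
      (matrixProductCode_ne_bot hinj (hC 0)) fun r => ?_
    fin_cases r <;> simp [hd]

theorem stmt17 {F : Type*} [Field F] [Fintype F] [DecidableEq F]
    {l : ℕ} (hl : IsPrimePow l) (hodd : Odd l) (hmod : l ^ 2 % 4 = 1)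
    (hcard : Fintype.card F = l ^ 2)
    {n : ℕ} (C : Fin 4 → Submodule F (Fin n → F)) (k d : Fin 4 → ℕ)
    (hLCD : ∀ i, IsHermitianLCD l (C i))
    (hk : ∀ i, Module.finrank F (C i) = k i)
    (hC : ∀ i, C i ≠ ⊥)
    (hd : ∀ i, minDist (C i) = d i) :
    IsHermitianLCD l
      (matrixProductCode (!![1,1,1,1; 1,1,-1,-1; 1,-1,1,-1; 1,-1,-1,1] :
        Matrix (Fin 4) (Fin 4) F) C) ∧
    Module.finrank F
      (matrixProductCode (!![1,1,1,1; 1,1,-1,-1; 1,-1,1,-1; 1,-1,-1,1] :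
        Matrix (Fin 4) (Fin 4) F) C) = k 0 + k 1 + k 2 + k 3 ∧
    min (4 * d 0) (min (2 * d 1) (min (2 * d 2) (d 3)))
      ≤ minDist
        (matrixProductCode (!![1,1,1,1; 1,1,-1,-1; 1,-1,1,-1; 1,-1,-1,1] :
          Matrix (Fin 4) (Fin 4) F) C) :=
  stmt17_general hodd hcard C k d hLCD hk hC hd
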